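/- Every unital subalgebra 𝒜 ⊆ M_n(ℝ) whose underlying set is the linear span of a multiplicatively closed set of matrix units E_{ij} (i ≤ j) containing all diagonal matrix units is generated as a unital algebra by two entrywise nonnegative matrices A, B with AB − BA entrywise nonnegative. -/

import Mathlib

/-!
Take `A = diagonal d` with `d` injective and antitone, and `B` the 0/1 indicator matrix of `S`.
Then `(AB - BA)ᵢⱼ = (dᵢ - dⱼ) Bᵢⱼ ≥ 0` because `S` is upper triangular. Lagrange interpolation
of `d` produces every diagonal unit `Eᵢᵢ` as a polynomial in `A`, and `Eᵢᵢ B Eⱼⱼ = Bᵢⱼ Eᵢⱼ`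
recovers each matrix unit of `S`; conversely `A` and `B` lie in the span because `S` contains
the diagonal.
-/

open Matrix

namespace Matrix

theorem mem_span_single_of_support_subset {m n R : Type*} [Fintype m] [Fintype n]
    [DecidableEq m] [DecidableEq n] [Semiring R] {S : Set (m × n)} {M : Matrix m n R}
    (hM : ∀ i j, M i j ≠ 0 → (i, j) ∈ S) :
    M ∈ Submodule.span R ((fun p : m × n => single p.1 p.2 (1 : R)) '' S) := by
  rw [matrix_eq_sum_single M]
  refine Submodule.sum_mem _ fun i _ => Submodule.sum_mem _ fun j _ => ?_
  by_cases h : M i j = 0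
  · simp [h]
  · rw [← mul_one (M i j), ← smul_eq_mul, ← smul_single]
    exact Submodule.smul_mem _ _ (Submodule.subset_span ⟨(i, j), hM i j h, rfl⟩)

theorem diagonal_mul_sub_mul_diagonal_apply {n R : Type*} [DecidableEq n] [Fintype n]
    [CommRing R] (d : n → R) (M : Matrix n n R) (i j : n) :
    (diagonal d * M - M * diagonal d) i j = (d i - d j) * M i j := by
  simp only [sub_apply, diagonal_mul, mul_diagonal]
  ring

section Field

variable {ι K : Type*} [Fintype ι] [DecidableEq ι] [Field K]

theorem single_mem_adjoin_diagonal {d : ι → K} (hd : Function.Injective d) (i : ι) :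
    single i i (1 : K) ∈ Algebra.adjoin K {diagonal d} := by
  rw [Algebra.adjoin_singleton_eq_range_aeval]
  set p := Lagrange.basis Finset.univ d i
  have hvals : Polynomial.aeval d p = Pi.single i 1 := by
    ext k
    rw [← Pi.evalAlgHom_apply K (fun _ => K) k (Polynomial.aeval d p),
      ← Polynomial.aeval_algHom_apply, Pi.evalAlgHom_apply,
      Polynomial.coe_aeval_eq_eval]
    rcases eq_or_ne k i with rfl | hki
    · simp [p, Lagrange.eval_basis_self hd.injOn (Finset.mem_univ k)]
    · simp [p, Lagrange.eval_basis_of_ne hki.symm (Finset.mem_univ k), hki]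
  refine ⟨p, ?_⟩
  change Polynomial.aeval (diagonalAlgHom K d) p = _
  rw [Polynomial.aeval_algHom_apply, hvals, diagonalAlgHom_apply, diagonal_single]

theorem single_apply_mem_of_diagonal_mem {𝒜 : Subalgebra K (Matrix ι ι K)} {d : ι → K}
    (hd : Function.Injective d) (hd𝒜 : diagonal d ∈ 𝒜) {M : Matrix ι ι K} (hM : M ∈ 𝒜)
    (i j : ι) : single i j (M i j) ∈ 𝒜 := by
  have hunit (k : ι) : single k k (1 : K) ∈ 𝒜 :=
    Algebra.adjoin_le (Set.singleton_subset_iff.2 hd𝒜) (single_mem_adjoin_diagonal hd k)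
  simpa using mul_mem (mul_mem (hunit i) hM) (hunit j)

theorem adjoin_diagonal_indicator_eq {𝒜 : Subalgebra K (Matrix ι ι K)} {S : Set (ι × ι)}
    [DecidablePred (· ∈ S)] (hdiagS : ∀ i, (i, i) ∈ S)
    (hspan : (𝒜 : Set (Matrix ι ι K)) =
      Submodule.span K ((fun p : ι × ι => single p.1 p.2 (1 : K)) '' S))
    {d : ι → K} (hd : Function.Injective d) :
    Algebra.adjoin K {diagonal d, of fun i j => if (i, j) ∈ S then 1 else 0} = 𝒜 := by
  set B : Matrix ι ι K := of fun i j => if (i, j) ∈ S then 1 else 0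
  have hmem {M : Matrix ι ι K} (hM : ∀ i j, M i j ≠ 0 → (i, j) ∈ S) : M ∈ 𝒜 := by
    rw [← SetLike.mem_coe, hspan]
    exact mem_span_single_of_support_subset hM
  refine le_antisymm (Algebra.adjoin_le ?_) fun x hx => ?_
  · refine Set.insert_subset_iff.2 ⟨hmem fun i j h => ?_, Set.singleton_subset_iff.2 <|
      hmem fun i j h => by_contra fun hij => by simp [B, hij] at h⟩
    obtain rfl : i = j := by_contra fun hij => by simp [hij] at h
    exact hdiagS i
  · rw [← SetLike.mem_coe, hspan] at hx
    change x ∈ Subalgebra.toSubmodule (Algebra.adjoin K {diagonal d, B})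
    refine Submodule.span_le.2 ?_ hx
    rintro _ ⟨⟨i, j⟩, hij, rfl⟩
    have hBij : B i j = 1 := if_pos hij
    rw [SetLike.mem_coe, Subalgebra.mem_toSubmodule, ← hBij]
    exact single_apply_mem_of_diagonal_mem hd (Algebra.subset_adjoin (by simp))
      (Algebra.subset_adjoin (by simp)) i j

end Field

end Matrix

/-- Every upper-triangular matrix incidence algebra (the span of a set of matrix units
`E_{ij}`, `i ≤ j`, containing all diagonal units) is generated by two entrywise
nonnegative matrices with entrywise nonnegative commutator. -/
theorem stmt15 (n : ℕ) (𝒜 : Subalgebra ℝ (Matrix (Fin n) (Fin n) ℝ))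
    (S : Set (Fin n × Fin n))
    (hupper : ∀ p ∈ S, p.1 ≤ p.2)
    (hdiagS : ∀ i : Fin n, (i, i) ∈ S)
    (hspan : (𝒜 : Set (Matrix (Fin n) (Fin n) ℝ)) =
      (Submodule.span ℝ ((fun p : Fin n × Fin n =>
        Matrix.single p.1 p.2 (1 : ℝ)) '' S) : Set (Matrix (Fin n) (Fin n) ℝ))) :
    ∃ A B : Matrix (Fin n) (Fin n) ℝ,
      (∀ i j, 0 ≤ A i j) ∧ (∀ i j, 0 ≤ B i j) ∧
      (∀ i j, 0 ≤ (A * B - B * A) i j) ∧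
      Algebra.adjoin ℝ {A, B} = 𝒜 := by
  classical
  set d : Fin n → ℝ := fun i => (i.rev : ℕ)
  have hd : Function.Injective d := fun i j h =>
    Fin.rev_injective (Fin.val_injective (Nat.cast_injective h))
  have hd_anti {i j : Fin n} (hij : i ≤ j) : d j ≤ d i := Nat.cast_le.2 (Fin.rev_le_rev.2 hij)
  refine ⟨diagonal d, of fun i j => if (i, j) ∈ S then 1 else 0, fun i j => ?_, fun i j => ?_,
    fun i j => ?_, adjoin_diagonal_indicator_eq hdiagS hspan hd⟩
  · rw [diagonal_apply]
    split_ifs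
    exacts [Nat.cast_nonneg _, le_rfl]
  · by_cases hij : (i, j) ∈ S <;> simp [hij]
  · rw [diagonal_mul_sub_mul_diagonal_apply]
    by_cases hij : (i, j) ∈ S
    · simpa [hij] using hd_anti (hupper _ hij)
    · simp [hij]
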